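/- Let y and y_n (n ≥ 1) be real-valued functions on ℚ₂ × [0,1] that are nondecreasing in the first variable (r₁ ≤ r₂ implies y(r₁,t) ≤ y(r₂,t) for all t, and likewise for each y_n). Define ỹ(u,t) = inf{y(r,t) : r ∈ ℚ₂, r > u} for u ∈ [0,1) and ỹ(1,t) = y(1,t), and define ỹ_n analogously. Suppose that for every r ∈ ℚ₂, sup_{t∈[0,1]} |y_n(r,t) − y(r,t)| → 0 as n → ∞. Then for every ε > 0 there exists N such that for all n ≥ N, all t ∈ [0,1]: (i) for all u ∈ [0,1), ỹ_n(u,t) ≤ ỹ(min(u+ε,1),t) + ε and ỹ(u,t) ≤ ỹ_n(min(u+ε,1),t) + ε; (ii) for all u ∈ [ε,1], ỹ_n(u,t) ≥ ỹ(u−ε,t) − ε and ỹ(u,t) ≥ ỹ_n(u−ε,t) − ε. (This expresses that the map y ↦ ỹ is continuous from pointwise-in-r, uniform-in-t convergence to the uniform-in-t Lévy distance.) -/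

import Mathlib

/-!
Fix `t`. For a dyadic `q` with `a < q ≤ b`, monotonicity in `r` gives `ỹ_A(a,t) ≤ A(q,t)` and
`B(q,t) ≤ ỹ_B(b,t)`, so `A(q,t) ≤ B(q,t) + ε` implies `ỹ_A(a,t) ≤ ỹ_B(b,t) + ε`. Every interval
`(a, a + ε)` with `a ∈ [0,1)` contains a point of a fixed finite grid `{k / 2^m}`, and on a finite
set of dyadics `yₙ` is eventually `ε`-close to `y` uniformly in `t`.
-/

open Filter Topology

noncomputable section

/-- The set `ℚ₂ = {k/2^n : n ≥ 1, 0 ≤ k ≤ 2^n}` of dyadic rational points of `[0,1]`. -/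
def dyadics : Set ℝ :=
  {x | ∃ n : ℕ, 1 ≤ n ∧ ∃ k : ℕ, k ≤ 2 ^ n ∧ x = (k : ℝ) / 2 ^ n}

/-- The right-continuous extension `ỹ(u,t) = inf {y(r,t) : r ∈ ℚ₂, r > u}` for
`u ∈ [0,1)`, and `ỹ(1,t) = y(1,t)`. -/
def rcExt (y : ℝ → ℝ → ℝ) (u t : ℝ) : ℝ :=
  if u < 1 then sInf {v | ∃ r ∈ dyadics, u < r ∧ v = y r t} else y 1 t

lemma zero_mem_dyadics : (0 : ℝ) ∈ dyadics := ⟨1, le_rfl, 0, by norm_num, by norm_num⟩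

lemma one_mem_dyadics : (1 : ℝ) ∈ dyadics := ⟨1, le_rfl, 2, by norm_num, by norm_num⟩

lemma nat_div_two_pow_mem_dyadics {m k : ℕ} (hk : k ≤ 2 ^ m) : (k : ℝ) / 2 ^ m ∈ dyadics :=
  ⟨m + 1, by omega, 2 * k, by rw [pow_succ]; omega, by push_cast; field_simp; ring⟩

lemma dyadics_nonneg {r : ℝ} (hr : r ∈ dyadics) : 0 ≤ r := by
  obtain ⟨n, -, k, -, rfl⟩ := hr
  positivity

lemma dyadics_le_one {r : ℝ} (hr : r ∈ dyadics) : r ≤ 1 := by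
  obtain ⟨n, -, k, hk, rfl⟩ := hr
  rw [div_le_one (by positivity)]
  exact_mod_cast hk

lemma exists_nat_le_two_pow_lt_div_le (m : ℕ) {a : ℝ} (ha₀ : 0 ≤ a) (ha₁ : a < 1) :
    ∃ k : ℕ, k ≤ 2 ^ m ∧ a < k / 2 ^ m ∧ (k : ℝ) / 2 ^ m ≤ a + 1 / 2 ^ m := by
  have hpos : (0 : ℝ) < 2 ^ m := by positivity
  have hfloor : ⌊a * 2 ^ m⌋₊ < 2 ^ m := by
    rw [Nat.floor_lt (by positivity)]
    push_cast
    nlinarith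
  refine ⟨⌊a * 2 ^ m⌋₊ + 1, hfloor, ?_, ?_⟩
  · rw [lt_div_iff₀ hpos]
    exact_mod_cast Nat.lt_floor_add_one _
  · rw [div_le_iff₀ hpos, add_mul, one_div_mul_cancel hpos.ne']
    push_cast
    linarith [Nat.floor_le (show 0 ≤ a * 2 ^ m by positivity)]

lemma exists_finset_dyadics_forall_exists_mem_Ioo {ε : ℝ} (hε : 0 < ε) :
    ∃ G : Finset ℝ, ↑G ⊆ dyadics ∧ ∀ a ∈ Set.Ico (0 : ℝ) 1, ∃ q ∈ G, a < q ∧ q < a + ε := by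
  obtain ⟨m, hm⟩ := exists_pow_lt_of_lt_one hε (by norm_num : (1 / 2 : ℝ) < 1)
  rw [one_div_pow] at hm
  refine ⟨(Finset.range (2 ^ m + 1)).image fun k : ℕ => (k : ℝ) / 2 ^ m, ?_, fun a ha => ?_⟩
  · intro q hq
    obtain ⟨k, hk, rfl⟩ := Finset.mem_image.1 hq
    exact nat_div_two_pow_mem_dyadics (Nat.lt_succ_iff.1 (Finset.mem_range.1 hk))
  · obtain ⟨k, hk, hak, hka⟩ := exists_nat_le_two_pow_lt_div_le m ha.1 ha.2
    exact ⟨k / 2 ^ m, Finset.mem_image_of_mem _ (Finset.mem_range.2 (Nat.lt_succ_of_le hk)),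
      hak, by linarith⟩

section Extension

variable {A : ℝ → ℝ → ℝ} {t : ℝ}

lemma rcExt_le_of_lt (hA : MonotoneOn (A · t) dyadics) {a q : ℝ} (hq : q ∈ dyadics)
    (haq : a < q) : rcExt A a t ≤ A q t := by
  have hbdd : BddBelow {v | ∃ r ∈ dyadics, a < r ∧ v = A r t} := by
    refine ⟨A 0 t, ?_⟩
    rintro v ⟨r, hr, -, rfl⟩
    exact hA zero_mem_dyadics hr (dyadics_nonneg hr)
  rw [rcExt, if_pos (haq.trans_le (dyadics_le_one hq))]
  exact csInf_le hbdd ⟨q, hq, haq, rfl⟩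

lemma le_rcExt (hA : MonotoneOn (A · t) dyadics) {b q : ℝ} (hq : q ∈ dyadics) (hqb : q ≤ b) :
    A q t ≤ rcExt A b t := by
  rw [rcExt]
  split_ifs with hb
  · refine le_csInf ⟨A 1 t, 1, one_mem_dyadics, hb, rfl⟩ ?_
    rintro v ⟨r, hr, hbr, rfl⟩
    exact hA hq hr (hqb.trans hbr.le)
  · exact hA hq one_mem_dyadics (dyadics_le_one hq)

lemma rcExt_le_rcExt_add {B : ℝ → ℝ → ℝ} (hA : MonotoneOn (A · t) dyadics)
    (hB : MonotoneOn (B · t) dyadics) {a b q ε : ℝ} (hq : q ∈ dyadics) (haq : a < q)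
    (hqb : q ≤ b) (hAB : A q t ≤ B q t + ε) : rcExt A a t ≤ rcExt B b t + ε :=
  calc rcExt A a t ≤ A q t := rcExt_le_of_lt hA hq haq
    _ ≤ B q t + ε := hAB
    _ ≤ rcExt B b t + ε := by gcongr; exact le_rcExt hB hq hqb

end Extension

/-- **Continuity of the extension map.** If `yₙ → y` uniformly in `t` at each dyadic
rational `r`, with all functions nondecreasing in `r`, then the extensions `ỹₙ`
converge to `ỹ` in the (uniform-in-`t`) Lévy-distance sense. -/
theorem rcExt_continuous
    (y : ℝ → ℝ → ℝ) (yseq : ℕ → ℝ → ℝ → ℝ)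
    (hmono : ∀ r₁ ∈ dyadics, ∀ r₂ ∈ dyadics, r₁ ≤ r₂ →
      ∀ t ∈ Set.Icc (0 : ℝ) 1, y r₁ t ≤ y r₂ t)
    (hmonoseq : ∀ n, ∀ r₁ ∈ dyadics, ∀ r₂ ∈ dyadics, r₁ ≤ r₂ →
      ∀ t ∈ Set.Icc (0 : ℝ) 1, yseq n r₁ t ≤ yseq n r₂ t)
    (hconv : ∀ r ∈ dyadics,
      TendstoUniformlyOn (fun n t => yseq n r t) (fun t => y r t) atTop
        (Set.Icc (0 : ℝ) 1)) :
    ∀ ε > (0 : ℝ), ∃ N : ℕ, ∀ n ≥ N, ∀ t ∈ Set.Icc (0 : ℝ) 1,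
      (∀ u ∈ Set.Ico (0 : ℝ) 1,
        rcExt (yseq n) u t ≤ rcExt y (min (u + ε) 1) t + ε ∧
        rcExt y u t ≤ rcExt (yseq n) (min (u + ε) 1) t + ε) ∧
      (∀ u ∈ Set.Icc ε 1,
        rcExt (yseq n) u t ≥ rcExt y (u - ε) t - ε ∧
        rcExt y u t ≥ rcExt (yseq n) (u - ε) t - ε) := by
  intro ε hε
  obtain ⟨G, hGd, hG⟩ := exists_finset_dyadics_forall_exists_mem_Ioo hε
  obtain ⟨N, hN⟩ := eventually_atTop.1 <| (eventually_all_finset G).2 fun q hq =>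
    Metric.tendstoUniformlyOn_iff.1 (hconv q (hGd hq)) ε hε
  refine ⟨N, fun n hn t ht => ?_⟩
  have hy : MonotoneOn (y · t) dyadics := fun r₁ h₁ r₂ h₂ h => hmono r₁ h₁ r₂ h₂ h t ht
  have hyn : MonotoneOn (yseq n · t) dyadics :=
    fun r₁ h₁ r₂ h₂ h => hmonoseq n r₁ h₁ r₂ h₂ h t ht
  refine ⟨fun u hu => ?_, fun u hu => ?_⟩
  · obtain ⟨q, hqG, huq, hqu⟩ := hG u hu
    have hclose := abs_sub_lt_iff.1 (hN n hn q hqG t ht)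
    have hqb : q ≤ min (u + ε) 1 := le_min hqu.le (dyadics_le_one (hGd hqG))
    exact ⟨rcExt_le_rcExt_add hyn hy (hGd hqG) huq hqb (by linarith),
      rcExt_le_rcExt_add hy hyn (hGd hqG) huq hqb (by linarith)⟩
  · obtain ⟨q, hqG, huq, hqu⟩ := hG (u - ε) ⟨by linarith [hu.1], by linarith [hu.2]⟩
    have hclose := abs_sub_lt_iff.1 (hN n hn q hqG t ht)
    have hqb : q ≤ u := by linarith
    constructor
    · linarith [rcExt_le_rcExt_add (ε := ε) hy hyn (hGd hqG) huq hqb (by linarith)]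
    · linarith [rcExt_le_rcExt_add (ε := ε) hyn hy (hGd hqG) huq hqb (by linarith)]

end
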